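/- arXiv:2105.01740 — 3 statements merged into one kernel-verified Lean document; each statement's English description precedes it below -/
import Mathlib

section
/- Let n ≥ 1, h > 0, L = 2nh, and consider the uniform one-dimensional grid x̃_j = 2jh for j = 0, …, n with inverse-square weight w(x̃_i, x̃_j) = 1/(x̃_j − x̃_i)². For the quadratic function u(x) = α₀ + α₁ x + α₂ x², the non-local first derivative δu/δx(x̃_i) = (1/n) ∑_{j ≠ i} (u(x̃_j) − u(x̃_i)) (x̃_j − x̃_i) w(x̃_i, x̃_j) satisfies the exact identity δu/δx(x̃_i) = u′(x̃_i) + α₂ · ((n+1)/n) · (L/2 − x̃_i) for every i = 0, …, n, where u′(x̃_i) = α₁ + 2α₂ x̃_i is the ordinary derivative. -/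
/-!
For `x ≠ y` the inverse-square weight cancels one factor of `y - x`, so each summand is the
slope of the quadratic `u`, namely `α₁ + α₂ (x + y)`. On the grid this is affine in `j`, and
summing over `j ≠ i` with Gauss' formula `∑ j = n(n+1)/2` gives `n u′(x̃_i)` plus the error
term `α₂ (n+1)(L/2 - x̃_i)`.
-/

open Finset

theorem inverse_square_weighted_difference_eq_slope {α₀ α₁ α₂ : ℝ} {u : ℝ → ℝ}
    (hu : ∀ x, u x = α₀ + α₁ * x + α₂ * x ^ 2) {x y : ℝ} (hxy : x ≠ y) :
    (u y - u x) * (y - x) * (1 / (y - x) ^ 2) = α₁ + α₂ * (x + y) := by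
  have hyx : y - x ≠ 0 := sub_ne_zero.mpr hxy.symm
  rw [hu, hu]
  field_simp
  ring

theorem sum_range_natCast_mul_two {R : Type*} [CommSemiring R] (n : ℕ) :
    (∑ j ∈ range (n + 1), (j : R)) * 2 = n * (n + 1) := by
  have hnat : (∑ j ∈ range (n + 1), j) * 2 = n * (n + 1) := by
    rw [sum_range_id_mul_two, Nat.add_sub_cancel, Nat.mul_comm]
  simpa using congrArg (Nat.cast : ℕ → R) hnat

theorem sum_erase_range_affine_mul_two {R : Type*} [CommRing R] {n i : ℕ} (hi : i ∈ range (n + 1))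
    (a b : R) :
    (∑ j ∈ (range (n + 1)).erase i, (a + b * j)) * 2 =
      2 * (n * a - b * i) + b * (n * (n + 1)) := by
  rw [sum_erase_eq_sub hi, sum_add_distrib, sum_const, card_range, ← mul_sum, sub_mul, add_mul,
    mul_assoc, sum_range_natCast_mul_two]
  ring

/-- On the uniform grid `x̃_j = 2jh`, `j = 0,…,n`, with inverse-square weight,
the non-local first derivative of the quadratic `u(x) = α₀ + α₁x + α₂x²` satisfies
`δu/δx(x̃_i) = u′(x̃_i) + α₂ ((n+1)/n) (L/2 − x̃_i)` where `L = 2nh`. -/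
theorem nonlocal_derivative_quadratic_error
    (n : ℕ) (hn : 1 ≤ n) (h : ℝ) (hh : 0 < h) (L : ℝ) (hL : L = 2 * n * h)
    (α₀ α₁ α₂ : ℝ) (u : ℝ → ℝ) (hu : ∀ x, u x = α₀ + α₁ * x + α₂ * x ^ 2) :
    ∀ i ∈ Finset.range (n + 1),
      (1 / (n : ℝ)) *
        ∑ j ∈ (Finset.range (n + 1)).erase i,
          (u (2 * j * h) - u (2 * i * h)) * (2 * j * h - 2 * i * h) *
            (1 / (2 * j * h - 2 * i * h) ^ 2) =
      (α₁ + 2 * α₂ * (2 * i * h)) + α₂ * (((n : ℝ) + 1) / n) * (L / 2 - 2 * i * h) := by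
  intro i hi
  have hn0 : (n : ℝ) ≠ 0 := Nat.cast_ne_zero.mpr (by omega)
  have hslope : ∀ j ∈ (range (n + 1)).erase i,
      (u (2 * j * h) - u (2 * i * h)) * (2 * j * h - 2 * i * h) *
        (1 / (2 * j * h - 2 * i * h) ^ 2) = (α₁ + α₂ * (2 * i * h)) + (2 * α₂ * h) * j := by
    intro j hj
    have hji : (i : ℝ) ≠ j := by exact_mod_cast (ne_of_mem_erase hj).symm
    rw [inverse_square_weighted_difference_eq_slope hu (by simpa [hh.ne'] using hji)]
    ring
  have hsum := sum_erase_range_affine_mul_two hi (α₁ + α₂ * (2 * i * h)) (2 * α₂ * h)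
  rw [sum_congr rfl hslope, hL]
  generalize (∑ j ∈ (range (n + 1)).erase i, (α₁ + α₂ * (2 * i * h) + 2 * α₂ * h * j)) = S at hsum
  field_simp
  linear_combination hsum / 2
end

section
/- Let n ≥ 1, h > 0, L = 2nh, let l ≥ 1 and s ≥ 0 be natural numbers, let C ≥ 0 be a real constant, and let e : ℝ → ℝ be a measurable function such that for each i = 0, …, n−1 and every x ∈ [2ih, 2(i+1)h] one has |e(x)| ≤ C (x − 2ih)^s. Then the normalized l-norm interpolation error satisfies ((1/L) ∫_0^L |e(x)|^l dx)^{1/l} ≤ (2^s C / (l s + 1)^{1/l}) · h^s; in particular the total error is O(h^s). -/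
open intervalIntegral MeasureTheory Finset

/-- Total `l`-norm interpolation error bound on a uniform mesh: if on each
subinterval `[2ih, 2(i+1)h]` the pointwise error satisfies `|e(x)| ≤ C(x − 2ih)^s`,
then `((1/L) ∫_0^L |e(x)|^l dx)^(1/l) ≤ (2^s C / (ls+1)^(1/l)) h^s`,
i.e. the total error is `O(h^s)`. -/

theorem total_interpolation_error_bound
    (n : ℕ) (hn : 1 ≤ n) (h : ℝ) (hh : 0 < h) (L : ℝ) (hL : L = 2 * n * h)
    (l s : ℕ) (hl : 1 ≤ l) (C : ℝ) (hC : 0 ≤ C)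
    (e : ℝ → ℝ) (he : Measurable e)
    (hbound : ∀ i < n, ∀ x ∈ Set.Icc (2 * i * h) (2 * (i + 1) * h),
      |e x| ≤ C * (x - 2 * i * h) ^ s) :
    ((1 / L) * ∫ x in (0:ℝ)..L, |e x| ^ l) ^ (1 / (l : ℝ)) ≤
      (2 ^ s * C / (((l : ℝ) * s + 1) ^ (1 / (l : ℝ)))) * h ^ s := by
  have hl0 : (0:ℝ) < l := by exact_mod_cast hl
  have h2h : (0:ℝ) < 2 * h := by linarith
  set m := l * s with hm
  set f : ℝ → ℝ := fun x => |e x| ^ l with hf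
  set aa : ℕ → ℝ := fun i => 2 * (i:ℝ) * h with haa
  have hstep : ∀ i : ℕ, aa (i+1) = aa i + 2 * h := by
    intro i; simp [haa]; push_cast; ring
  -- pointwise bound with l-th powers
  have hptw : ∀ i < n, ∀ x ∈ Set.Icc (aa i) (aa (i+1)),
      f x ≤ C ^ l * (x - aa i) ^ m := by
    intro i hi x hx
    have hx' : x ∈ Set.Icc (2 * (i:ℝ) * h) (2 * ((i:ℝ) + 1) * h) := by
      simpa [haa, Nat.cast_add, Nat.cast_one] using hx
    have hb := hbound i hi x hx'
    have h1 : f x ≤ (C * (x - aa i) ^ s) ^ l :=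
      pow_le_pow_left₀ (abs_nonneg _) hb l
    calc f x ≤ (C * (x - aa i) ^ s) ^ l := h1
      _ = C ^ l * (x - aa i) ^ m := by
          rw [mul_pow, ← pow_mul, hm, Nat.mul_comm l s]
  -- integrability of f on each subinterval
  have hg_int : ∀ a : ℝ, IntervalIntegrable (fun x => C ^ l * (x - a) ^ m)
      volume a (a + 2*h) := by
    intro a
    exact (Continuous.intervalIntegrable (by continuity) _ _)
  have hint : ∀ i < n, IntervalIntegrable f volume (aa i) (aa (i+1)) := by
    intro i hi
    rw [hstep i]
    apply IntervalIntegrable.mono_fun (hg_int (aa i))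
    · exact ((he.abs.pow_const l)).aestronglyMeasurable
    · have hle : aa i ≤ aa i + 2*h := by linarith
      rw [Set.uIoc_of_le hle]
      rw [Filter.EventuallyLE, ae_restrict_iff' measurableSet_Ioc]
      filter_upwards with x hx
      have hx' : x ∈ Set.Icc (aa i) (aa (i+1)) := by
        rw [hstep i]; exact ⟨le_of_lt hx.1, hx.2⟩
      have h1 := hptw i hi x hx'
      have hfx : 0 ≤ f x := by positivity
      have hgx : 0 ≤ C ^ l * (x - aa i) ^ m := le_trans hfx h1
      rw [Real.norm_eq_abs, Real.norm_eq_abs, abs_of_nonneg hfx, abs_of_nonneg hgx]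
      exact h1
  -- split the integral
  have haa0 : aa 0 = 0 := by simp [haa]
  have haan : aa n = L := by simp [haa, hL]
  have hsplit : ∫ x in (0:ℝ)..L, f x = ∑ i ∈ range n, ∫ x in aa i..aa (i+1), f x := by
    rw [← haa0, ← haan]
    exact (intervalIntegral.sum_integral_adjacent_intervals hint).symm
  -- value of each majorant integral
  have key : ∀ a : ℝ, (∫ x in a..(a + 2*h), C ^ l * (x - a) ^ m)
      = C ^ l * ((2*h) ^ (m+1) / (m+1)) := by
    intro a
    rw [intervalIntegral.integral_const_mul,
      intervalIntegral.integral_comp_sub_right (fun x => x ^ m) a]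
    simp [integral_pow]
  -- bound each subinterval integral
  have hterm : ∀ i < n, (∫ x in aa i..aa (i+1), f x)
      ≤ C ^ l * ((2*h) ^ (m+1) / (m+1)) := by
    intro i hi
    have hle : aa i ≤ aa (i+1) := by rw [hstep i]; linarith
    have := intervalIntegral.integral_mono_on hle (hint i hi)
      (by rw [hstep i]; exact hg_int (aa i)) (hptw i hi)
    calc (∫ x in aa i..aa (i+1), f x)
        ≤ ∫ x in aa i..aa (i+1), C ^ l * (x - aa i) ^ m := this
      _ = C ^ l * ((2*h) ^ (m+1) / (m+1)) := by rw [hstep i]; exact key (aa i)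
  -- total integral bound
  have hsum : (∫ x in (0:ℝ)..L, f x) ≤ n * (C ^ l * ((2*h) ^ (m+1) / (m+1))) := by
    rw [hsplit]
    calc ∑ i ∈ range n, ∫ x in aa i..aa (i+1), f x
        ≤ ∑ i ∈ range n, C ^ l * ((2*h) ^ (m+1) / (m+1)) :=
          Finset.sum_le_sum (fun i hi => hterm i (Finset.mem_range.mp hi))
      _ = n * (C ^ l * ((2*h) ^ (m+1) / (m+1))) := by
          rw [Finset.sum_const, card_range, nsmul_eq_mul]
  have hn0 : (0:ℝ) < n := by exact_mod_cast hn
  have hm1 : (0:ℝ) < (m:ℝ) + 1 := by positivity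
  have hB : (1 / L) * (∫ x in (0:ℝ)..L, f x) ≤ C ^ l * (2*h) ^ m / ((m:ℝ) + 1) := by
    have hLpos : 0 < L := by rw [hL]; positivity
    rw [div_mul_eq_mul_div, one_mul, div_le_iff₀ hLpos]
    calc (∫ x in (0:ℝ)..L, f x) ≤ n * (C ^ l * ((2*h) ^ (m+1) / (m+1))) := hsum
      _ = C ^ l * (2*h) ^ m / ((m:ℝ) + 1) * L := by
          rw [hL]; push_cast; field_simp; ring
  -- nonnegativity of LHS
  have hLHS0 : 0 ≤ (1 / L) * (∫ x in (0:ℝ)..L, f x) := by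
    have hLpos : 0 < L := by rw [hL]; positivity
    have : 0 ≤ ∫ x in (0:ℝ)..L, f x := by
      apply intervalIntegral.integral_nonneg (le_of_lt hLpos)
      intro x _; positivity
    positivity
  have hmono : ((1 / L) * ∫ x in (0:ℝ)..L, f x) ^ (1 / (l:ℝ))
      ≤ (C ^ l * (2*h) ^ m / ((m:ℝ) + 1)) ^ (1 / (l:ℝ)) :=
    Real.rpow_le_rpow hLHS0 hB (by positivity)
  refine le_trans hmono (le_of_eq ?_)
  -- compute the RHS equality
  have hln : (l:ℝ) ≠ 0 := ne_of_gt hl0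
  have h2hm : (0:ℝ) ≤ (2*h) ^ m := by positivity
  have hCl : (0:ℝ) ≤ C ^ l := by positivity
  rw [Real.div_rpow (by positivity) (le_of_lt hm1),
    Real.mul_rpow hCl h2hm]
  have e1 : (C ^ l) ^ (1 / (l:ℝ)) = C := by
    rw [← Real.rpow_natCast C l, ← Real.rpow_mul hC]
    rw [mul_one_div, div_self hln, Real.rpow_one]
  have e2 : ((2*h) ^ m) ^ (1 / (l:ℝ)) = 2 ^ s * h ^ s := by
    rw [← Real.rpow_natCast (2*h) m, ← Real.rpow_mul (le_of_lt h2h)]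
    have : (m:ℝ) * (1 / (l:ℝ)) = (s:ℝ) := by
      rw [hm]; push_cast; field_simp
    rw [this, Real.rpow_natCast, mul_pow]
  have e3 : ((m:ℝ) + 1) = (l:ℝ) * s + 1 := by rw [hm]; push_cast; ring
  rw [e1, e2, e3]
  ring
end

section
/- Fix L > 0 and a quadratic function u(x) = α₀ + α₁ x + α₂ x² with α₁ + (L/2)α₂ ≠ 0. For each n ≥ 1 set h = L/(2n) and x̃_j = 2jh for j = 0, …, n, let D_n = (1/n) ∑_{j=1}^n (u(x̃_j) − u(x̃_0)) (x̃_j − x̃_0) / (x̃_j − x̃_0)² be the non-local first derivative of u at x̃_0 with inverse-square weights, and define the fitted linear Taylor coefficient γ₁(n) = [ ∑_{j=0}^n (u(x̃_j) − u(x̃_0))(x̃_j − x̃_0) ] / [ D_n · ∑_{j=0}^n (x̃_j − x̃_0)² ]. Then lim_{n→∞} γ₁(n) = (α₁ + (3L/4)α₂) / (α₁ + (L/2)α₂). -/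
open Filter

noncomputable def Faux (α₁ α₂ L x : ℝ) : ℝ :=
  (2 * α₁ * (2 + x) + 3 * α₂ * L * (1 + x)) / ((2 * α₁ + α₂ * L * (1 + x)) * (2 + x))

lemma sum_Icc_id_real (n : ℕ) : ∑ j ∈ Finset.Icc 1 n, (j : ℝ) = n * (n + 1) / 2 := by
  induction n with
  | zero => simp
  | succ k ih =>
      rw [Finset.sum_Icc_succ_top (Nat.succ_le_succ (Nat.zero_le k)), ih]
      push_cast; ring

lemma sum_range_sq_real (n : ℕ) :
    ∑ j ∈ Finset.range (n + 1), (j : ℝ) ^ 2 = n * (n + 1) * (2 * n + 1) / 6 := by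
  induction n with
  | zero => simp
  | succ k ih =>
      rw [Finset.sum_range_succ, ih]
      push_cast; ring

lemma sum_range_cb_real (n : ℕ) :
    ∑ j ∈ Finset.range (n + 1), (j : ℝ) ^ 3 = (n * (n + 1) / 2) ^ 2 := by
  induction n with
  | zero => simp
  | succ k ih =>
      rw [Finset.sum_range_succ, ih]
      push_cast; ring

lemma Faux_tendsto (L α₁ α₂ : ℝ) (hα : α₁ + (L / 2) * α₂ ≠ 0) :
    Tendsto (fun n : ℕ => Faux α₁ α₂ L (1 / n)) atTop
      (nhds ((α₁ + (3 * L / 4) * α₂) / (α₁ + (L / 2) * α₂))) := by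
  have h2 : 2 * α₁ + α₂ * L ≠ 0 := by
    intro h; apply hα; linarith
  have h1 : Tendsto (fun n : ℕ => (1 : ℝ) / n) atTop (nhds 0) :=
    tendsto_one_div_atTop_nhds_zero_nat
  have hc : ContinuousAt (Faux α₁ α₂ L) 0 := by
    apply ContinuousAt.div
    · fun_prop
    · fun_prop
    · simp only [add_zero, mul_one]
      positivity
  have hval : Faux α₁ α₂ L 0 = (α₁ + (3 * L / 4) * α₂) / (α₁ + (L / 2) * α₂) := by
    unfold Faux
    rw [div_eq_div_iff (by simp only [add_zero, mul_one]; exact mul_ne_zero h2 two_ne_zero) hα]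
    ring
  have := (hc.tendsto.comp h1)
  rw [hval] at this
  exact this

/-- For the quadratic `u(x) = α₀ + α₁x + α₂x²` on the uniform grid `x̃_j = 2jh`,
`h = L/(2n)`, with inverse-square weights, the fitted linear Taylor coefficient
`γ₁(n) = [∑_j (u(x̃_j) − u(x̃_0))(x̃_j − x̃_0)] / [D_n ∑_j (x̃_j − x̃_0)²]`
(where `D_n` is the non-local first derivative of `u` at `x̃_0`) converges to
`(α₁ + (3L/4)α₂)/(α₁ + (L/2)α₂)` as `n → ∞`. -/
theorem fitted_taylor_coefficient_limit
    (L α₀ α₁ α₂ : ℝ) (hL : 0 < L) (hα : α₁ + (L / 2) * α₂ ≠ 0)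
    (u : ℝ → ℝ) (hu : ∀ x, u x = α₀ + α₁ * x + α₂ * x ^ 2)
    (D : ℕ → ℝ)
    (hD : ∀ n, 1 ≤ n → D n =
      (1 / (n : ℝ)) * ∑ j ∈ Finset.Icc 1 n,
        (u (2 * j * (L / (2 * n))) - u (2 * 0 * (L / (2 * n)))) *
          (2 * (j : ℝ) * (L / (2 * n)) - 2 * 0 * (L / (2 * n))) /
            (2 * (j : ℝ) * (L / (2 * n)) - 2 * 0 * (L / (2 * n))) ^ 2)
    (γ : ℕ → ℝ)
    (hγ : ∀ n, 1 ≤ n → γ n =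
      (∑ j ∈ Finset.range (n + 1),
          (u (2 * j * (L / (2 * n))) - u (2 * 0 * (L / (2 * n)))) *
            (2 * (j : ℝ) * (L / (2 * n)) - 2 * 0 * (L / (2 * n)))) /
        (D n * ∑ j ∈ Finset.range (n + 1),
          (2 * (j : ℝ) * (L / (2 * n)) - 2 * 0 * (L / (2 * n))) ^ 2)) :
    Tendsto γ atTop (nhds ((α₁ + (3 * L / 4) * α₂) / (α₁ + (L / 2) * α₂))) := by
  have hL0 : L ≠ 0 := hL.ne'
  -- closed form for D
  have hDval : ∀ n : ℕ, 1 ≤ n →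
      D n = (2 * n * α₁ + α₂ * L * (n + 1)) / (2 * n) := by
    intro n hn
    have hn0 : (n : ℝ) ≠ 0 := Nat.cast_ne_zero.mpr (by omega)
    rw [hD n hn]
    have hcongr : ∀ j ∈ Finset.Icc 1 n,
        (u (2 * j * (L / (2 * n))) - u (2 * 0 * (L / (2 * n)))) *
          (2 * (j : ℝ) * (L / (2 * n)) - 2 * 0 * (L / (2 * n))) /
            (2 * (j : ℝ) * (L / (2 * n)) - 2 * 0 * (L / (2 * n))) ^ 2
        = α₁ + α₂ * L / n * j := by
      intro j hj
      have hj0 : (j : ℝ) ≠ 0 := Nat.cast_ne_zero.mpr (by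
        have := (Finset.mem_Icc.mp hj).1; omega)
      rw [hu, hu]
      field_simp
      ring
    rw [Finset.sum_congr rfl hcongr, Finset.sum_add_distrib, Finset.sum_const,
      Nat.card_Icc, ← Finset.mul_sum, sum_Icc_id_real]
    simp only [Nat.add_sub_cancel, nsmul_eq_mul]
    field_simp
  -- eventual equality with Faux ∘ (1/n)
  have key : ∀ n : ℕ, 1 ≤ n → γ n = Faux α₁ α₂ L (1 / n) := by
    intro n hn
    have hn0 : (n : ℝ) ≠ 0 := Nat.cast_ne_zero.mpr (by omega)
    rw [hγ n hn, hDval n hn]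
    have hnum : ∀ j ∈ Finset.range (n + 1),
        (u (2 * j * (L / (2 * n))) - u (2 * 0 * (L / (2 * n)))) *
          (2 * (j : ℝ) * (L / (2 * n)) - 2 * 0 * (L / (2 * n)))
        = α₁ * (L / n) ^ 2 * (j : ℝ) ^ 2 + α₂ * (L / n) ^ 3 * (j : ℝ) ^ 3 := by
      intro j _
      rw [hu, hu]
      field_simp
      ring
    have hden : ∀ j ∈ Finset.range (n + 1),
        (2 * (j : ℝ) * (L / (2 * n)) - 2 * 0 * (L / (2 * n))) ^ 2
        = (L / n) ^ 2 * (j : ℝ) ^ 2 := by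
      intro j _
      field_simp
      ring
    rw [Finset.sum_congr rfl hnum, Finset.sum_congr rfl hden,
      Finset.sum_add_distrib, ← Finset.mul_sum, ← Finset.mul_sum, ← Finset.mul_sum,
      sum_range_sq_real, sum_range_cb_real]
    by_cases hP : 2 * (n : ℝ) * α₁ + α₂ * L * (n + 1) = 0
    · rw [hP]
      have hF : 2 * α₁ + α₂ * L * (1 + 1 / n) = 0 := by
        field_simp
        field_simp at hP
        linarith
      unfold Faux
      rw [hF]
      simp
    · unfold Faux
      have h2n : (2 : ℝ) + 1 / n ≠ 0 := by positivity
      have hF : 2 * α₁ + α₂ * L * (1 + 1 / n) ≠ 0 := by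
        intro h; apply hP
        field_simp at h
        linarith
      have hd1 : (2 * (n : ℝ) * α₁ + α₂ * L * (n + 1)) / (2 * n) *
          ((L / n) ^ 2 * (n * (n + 1) * (2 * n + 1) / 6)) ≠ 0 := by
        apply mul_ne_zero
        · apply div_ne_zero hP (by positivity)
        · have hn1 : (0:ℝ) < n := by positivity
          positivity
      rw [div_eq_div_iff hd1 (mul_ne_zero hF h2n)]
      field_simp
      ring
  apply Tendsto.congr' _ (Faux_tendsto L α₁ α₂ hα)
  filter_upwards [eventually_ge_atTop 1] with n hn using (key n hn).symm
end
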